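/- Let d ≥ 1, δ > 0, ι > 0, Λ > 0, x₀ ∈ ℝ^d, I_δ := x₀ + δ·[−1/2,1/2]^d. Let A : ℝ^d → ℝ^{d×d} be measurable with A(x)ζ·ζ ≥ |A(x)ζ|²/Λ for a.e. x ∈ I_δ and all ζ ∈ ℝ^d. Let θ and w be twice continuously differentiable on a neighborhood of the closed cube I_δ, let η ∈ ℝ^d, and let W_l(x) = c + η·x be affine. Assume the adjoint orthogonality relation ∫_{I_δ} ( A∇θ·∇w + ι² ⟨∇²θ, ∇²w⟩_F ) dx = 0. Then | η · ∫_{I_δ} A∇θ dx | ≤ max(Λ, 1) ( ‖∇θ‖_{L²(I_δ)} + ι‖∇²θ‖_{L²(I_δ)} ) ( ‖∇(w − W_l)‖_{L²(I_δ)} + ι‖∇²w‖_{L²(I_δ)} ). -/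
import Mathlib

open MeasureTheory Matrix

noncomputable section

/-- The cube `x₀ + r·[-1/2,1/2]^d`. -/
def cube (d : ℕ) (x₀ : Fin d → ℝ) (r : ℝ) : Set (Fin d → ℝ) :=
  {x | ∀ i, |x i - x₀ i| ≤ r / 2}

/-- The gradient of `v : ℝ^d → ℝ`. -/
def grad (d : ℕ) (v : (Fin d → ℝ) → ℝ) (x : Fin d → ℝ) : Fin d → ℝ :=
  fun i => fderiv ℝ v x (Pi.single i 1)

/-- The Hessian matrix of `v : ℝ^d → ℝ`. -/
def hess (d : ℕ) (v : (Fin d → ℝ) → ℝ) (x : Fin d → ℝ) : Matrix (Fin d) (Fin d) ℝ :=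
  Matrix.of fun i j => fderiv ℝ (fun y => fderiv ℝ v y (Pi.single j 1)) x (Pi.single i 1)

/-- Frobenius inner product of matrices. -/
def frob (d : ℕ) (M N : Matrix (Fin d) (Fin d) ℝ) : ℝ := ∑ i, ∑ j, M i j * N i j

/-! ### Auxiliary lemmas -/

lemma cube_eq (d : ℕ) (x₀ : Fin d → ℝ) (r : ℝ) :
    cube d x₀ r = Set.univ.pi (fun i => Set.Icc (x₀ i - r/2) (x₀ i + r/2)) := by
  ext x
  simp only [cube, Set.mem_setOf_eq, Set.mem_pi, Set.mem_univ, forall_true_left, Set.mem_Icc,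
    abs_le]
  constructor <;> intro h i <;> have := h i <;> constructor <;> linarith [this.1, this.2]

lemma sqrt_cs_sum {ι : Type*} [Fintype ι] (f g : ι → ℝ) :
    |∑ i, f i * g i| ≤ Real.sqrt (∑ i, f i ^ 2) * Real.sqrt (∑ i, g i ^ 2) := by
  calc |∑ i, f i * g i| = Real.sqrt ((∑ i, f i * g i) ^ 2) := (Real.sqrt_sq_eq_abs _).symm
    _ ≤ Real.sqrt ((∑ i, f i ^ 2) * (∑ i, g i ^ 2)) :=
        Real.sqrt_le_sqrt (Finset.sum_mul_sq_le_sq_mul_sq _ _ _)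
    _ = _ := Real.sqrt_mul (Finset.sum_nonneg fun i _ => sq_nonneg _) _

lemma sqrt_cs_frob {d : ℕ} (M N : Matrix (Fin d) (Fin d) ℝ) :
    |frob d M N| ≤ Real.sqrt (frob d M M) * Real.sqrt (frob d N N) := by
  have e : ∀ (M' N' : Matrix (Fin d) (Fin d) ℝ),
      frob d M' N' = ∑ ij : Fin d × Fin d, M' ij.1 ij.2 * N' ij.1 ij.2 := by
    intro M' N'; rw [frob, Fintype.sum_prod_type]
  rw [e M N, e M M, e N N]
  have := sqrt_cs_sum (fun ij : Fin d × Fin d => M ij.1 ij.2) (fun ij => N ij.1 ij.2)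
  simpa [pow_two] using this

lemma ell_sqrt_bound {Lam s t gd : ℝ} (hLam : 0 < Lam) (hs : 0 ≤ s)
    (h1 : s / Lam ≤ gd) (h2 : gd ^ 2 ≤ s * t) :
    Real.sqrt s ≤ Lam * Real.sqrt t := by
  rcases eq_or_lt_of_le hs with h | h
  · simp [← h, mul_nonneg hLam.le (Real.sqrt_nonneg t)]
  · have hst : s ≤ Lam ^ 2 * t := by
      have h3 : (s / Lam) ^ 2 ≤ gd ^ 2 := by
        apply sq_le_sq' _ h1
        nlinarith [div_nonneg hs hLam.le]
      have : s ^ 2 / Lam ^ 2 ≤ s * t := by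
        calc s ^ 2 / Lam ^ 2 = (s / Lam) ^ 2 := by ring
          _ ≤ s * t := le_trans h3 h2
      rw [div_le_iff₀ (by positivity)] at this
      nlinarith
    calc Real.sqrt s ≤ Real.sqrt (Lam ^ 2 * t) := Real.sqrt_le_sqrt hst
      _ = Lam * Real.sqrt t := by
        rw [Real.sqrt_mul (by positivity), Real.sqrt_sq hLam.le]

lemma integral_cs {α : Type*} [MeasurableSpace α] {μ : Measure α} {f g : α → ℝ}
    (hf2 : Integrable (fun x => f x ^ 2) μ) (hg2 : Integrable (fun x => g x ^ 2) μ)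
    (hfg : Integrable (fun x => f x * g x) μ) :
    ∫ x, f x * g x ∂μ ≤ Real.sqrt (∫ x, f x ^ 2 ∂μ) * Real.sqrt (∫ x, g x ^ 2 ∂μ) := by
  set a := ∫ x, f x ^ 2 ∂μ with ha
  set b := ∫ x, g x ^ 2 ∂μ with hb
  have ha0 : 0 ≤ a := integral_nonneg fun x => sq_nonneg _
  have hb0 : 0 ≤ b := integral_nonneg fun x => sq_nonneg _
  have key : ∀ (F G : α → ℝ), Integrable (fun x => F x ^ 2) μ →
      Integrable (fun x => F x * G x) μ → (∫ x, F x ^ 2 ∂μ) = 0 →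
      (∫ x, F x * G x ∂μ) = 0 := by
    intro F G hF2 hFG h0
    have hF0 : ∀ᵐ x ∂μ, F x = 0 := by
      have := (integral_eq_zero_iff_of_nonneg (fun x => sq_nonneg (F x)) hF2).mp h0
      filter_upwards [this] with x hx
      exact pow_eq_zero_iff (n := 2) (by norm_num) |>.mp hx
    have : (fun x => F x * G x) =ᵐ[μ] (fun _ => (0:ℝ)) := by
      filter_upwards [hF0] with x hx; simp [hx]
    rw [integral_congr_ae this, integral_zero]
  rcases eq_or_lt_of_le ha0 with h | hap
  · rw [key f g hf2 hfg h.symm]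
    positivity
  rcases eq_or_lt_of_le hb0 with h | hbp
  · have : ∫ x, f x * g x ∂μ = 0 := by
      have := key g f hg2 (by simpa [mul_comm] using hfg) h.symm
      simpa [mul_comm] using this
    rw [this]; positivity
  set sa := Real.sqrt a with hsa
  set sb := Real.sqrt b with hsb
  have hsa0 : 0 < sa := Real.sqrt_pos.mpr hap
  have hsb0 : 0 < sb := Real.sqrt_pos.mpr hbp
  have hsa2 : sa ^ 2 = a := Real.sq_sqrt ha0
  have hsb2 : sb ^ 2 = b := Real.sq_sqrt hb0
  have hpt : ∀ x, (sb * f x - sa * g x) ^ 2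
      = b * f x ^ 2 + a * g x ^ 2 - (2 * (sa * sb)) * (f x * g x) := by
    intro x; nlinarith [sq_nonneg (f x), sq_nonneg (g x)]
  have h0 : 0 ≤ ∫ x, (sb * f x - sa * g x) ^ 2 ∂μ :=
    integral_nonneg fun x => sq_nonneg _
  have hexp : ∫ x, (sb * f x - sa * g x) ^ 2 ∂μ
      = b * a + a * b - (2 * (sa * sb)) * ∫ x, f x * g x ∂μ := by
    have : (fun x => (sb * f x - sa * g x) ^ 2)
        = fun x => b * f x ^ 2 + a * g x ^ 2 - (2 * (sa * sb)) * (f x * g x) := by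
      funext x; exact hpt x
    rw [this]
    have i1 : Integrable (fun x => b * f x ^ 2 + a * g x ^ 2) μ :=
      (hf2.const_mul b).add (hg2.const_mul a)
    rw [integral_sub i1 (hfg.const_mul _),
      integral_add (hf2.const_mul b) (hg2.const_mul a), integral_const_mul,
      integral_const_mul, integral_const_mul, ← ha, ← hb]
  rw [hexp] at h0
  nlinarith [mul_pos hsa0 hsb0]

lemma grad_cont {d : ℕ} {f : (Fin d → ℝ) → ℝ} {U : Set (Fin d → ℝ)}
    (hU : IsOpen U) (hf : ContDiffOn ℝ 2 f U) (i : Fin d) :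
    ContinuousOn (fun x => grad d f x i) U := by
  have h1 : ContinuousOn (fun x => fderiv ℝ f x) U :=
    hf.continuousOn_fderiv_of_isOpen hU (by norm_num)
  exact h1.clm_apply continuousOn_const

lemma hess_cont {d : ℕ} {f : (Fin d → ℝ) → ℝ} {U : Set (Fin d → ℝ)}
    (hU : IsOpen U) (hf : ContDiffOn ℝ 2 f U) (i j : Fin d) :
    ContinuousOn (fun x => hess d f x i j) U := by
  have h1 : ContDiffOn ℝ 1 (fun x => fderiv ℝ f x) U :=
    hf.fderiv_of_isOpen hU (by norm_num)
  have h2 : ContDiffOn ℝ 1 (fun x => fderiv ℝ f x (Pi.single j 1)) U :=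
    h1.clm_apply contDiffOn_const
  have h3 : ContinuousOn (fun x => fderiv ℝ (fun y => fderiv ℝ f y (Pi.single j 1)) x) U :=
    h2.continuousOn_fderiv_of_isOpen hU (by norm_num)
  exact h3.clm_apply continuousOn_const

lemma grad_sub_affine {d : ℕ} {w : (Fin d → ℝ) → ℝ} {U : Set (Fin d → ℝ)}
    (hU : IsOpen U) (hw : ContDiffOn ℝ 2 w U) (c : ℝ) (η : Fin d → ℝ)
    {x : Fin d → ℝ} (hx : x ∈ U) (i : Fin d) :
    grad d (fun y => w y - (c + η ⬝ᵥ y)) x i = grad d w x i - η i := by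
  set L : (Fin d → ℝ) →L[ℝ] ℝ :=
    ∑ j, η j • ContinuousLinearMap.proj (R := ℝ) (φ := fun _ : Fin d => ℝ) j with hLdef
  have hLa : ∀ v, L v = η ⬝ᵥ v := by
    intro v
    simp [hLdef, ContinuousLinearMap.sum_apply, dotProduct]
  have hWd : HasFDerivAt (fun y : Fin d → ℝ => c + η ⬝ᵥ y) L x := by
    have h0 : HasFDerivAt (fun y : Fin d → ℝ => L y) L x := L.hasFDerivAt
    have h1 : HasFDerivAt (fun y : Fin d → ℝ => c + L y) L x := h0.const_add c
    have : (fun y : Fin d → ℝ => c + L y) = fun y => c + η ⬝ᵥ y := by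
      funext y; rw [hLa]
    rwa [this] at h1
  have hwd : DifferentiableAt ℝ w x :=
    (hw.differentiableOn (by norm_num)).differentiableAt (hU.mem_nhds hx)
  have hsub : HasFDerivAt (fun y => w y - (c + η ⬝ᵥ y)) (fderiv ℝ w x - L) x :=
    hwd.hasFDerivAt.sub hWd
  have : grad d (fun y => w y - (c + η ⬝ᵥ y)) x i
      = (fderiv ℝ w x - L) (Pi.single i 1) := by
    rw [grad, hsub.fderiv]
  rw [this, ContinuousLinearMap.sub_apply, hLa]
  congr 1
  simp [dotProduct, Pi.single_apply]

/-- Duality estimate for the corrector flux in a fixed macroscopic direction. -/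
theorem corrector_flux_duality_estimate
    (d : ℕ) (hd : 1 ≤ d) (δ ι Lam : ℝ)
    (hδ : 0 < δ) (hι : 0 < ι) (hLam : 0 < Lam)
    (x₀ : Fin d → ℝ)
    (A : (Fin d → ℝ) → Matrix (Fin d) (Fin d) ℝ)
    (hAmeas : ∀ i j, Measurable (fun x => A x i j))
    (hell : ∀ᵐ x ∂(volume.restrict (cube d x₀ δ)), ∀ ζ : Fin d → ℝ,
      (∑ i, ((A x).mulVec ζ) i ^ 2) / Lam ≤ (A x).mulVec ζ ⬝ᵥ ζ)
    (θ w : (Fin d → ℝ) → ℝ)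
    (hθ : ∃ U : Set (Fin d → ℝ), IsOpen U ∧ cube d x₀ δ ⊆ U ∧ ContDiffOn ℝ 2 θ U)
    (hw : ∃ U : Set (Fin d → ℝ), IsOpen U ∧ cube d x₀ δ ⊆ U ∧ ContDiffOn ℝ 2 w U)
    (c : ℝ) (η : Fin d → ℝ)
    (horth : (∫ x in cube d x₀ δ,
        ((A x).mulVec (grad d θ x) ⬝ᵥ grad d w x
          + ι ^ 2 * frob d (hess d θ x) (hess d w x))) = 0) :
    |η ⬝ᵥ (∫ x in cube d x₀ δ, (A x).mulVec (grad d θ x))|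
      ≤ max Lam 1
          * (Real.sqrt (∫ x in cube d x₀ δ, ∑ i, grad d θ x i ^ 2)
              + ι * Real.sqrt (∫ x in cube d x₀ δ, frob d (hess d θ x) (hess d θ x)))
          * (Real.sqrt (∫ x in cube d x₀ δ,
                ∑ i, grad d (fun y => w y - (c + η ⬝ᵥ y)) x i ^ 2)
              + ι * Real.sqrt (∫ x in cube d x₀ δ, frob d (hess d w x) (hess d w x))) := by
  obtain ⟨U₁, hU₁, hsub₁, hθ'⟩ := hθ
  obtain ⟨U₂, hU₂, hsub₂, hw'⟩ := hw
  have hSm : MeasurableSet (cube d x₀ δ) := by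
    rw [cube_eq]; exact MeasurableSet.univ_pi fun i => measurableSet_Icc
  have hSc : IsCompact (cube d x₀ δ) := by
    rw [cube_eq]; exact isCompact_univ_pi fun i => isCompact_Icc
  have hx₀S : x₀ ∈ cube d x₀ δ := by
    intro i; simpa using by positivity
  set S := cube d x₀ δ with hSdef
  set μ := volume.restrict S with hμdef
  haveI : IsFiniteMeasure μ := ⟨by
    rw [hμdef, Measure.restrict_apply_univ]; exact hSc.measure_lt_top⟩
  set g := grad d θ with hgdef
  set h := grad d w with hhdef
  set P := hess d θ with hPdef
  set Q := hess d w with hQdef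
  -- continuity of all scalar building blocks on S
  have hgc : ∀ i, ContinuousOn (fun x => g x i) S := fun i =>
    (grad_cont hU₁ hθ' i).mono hsub₁
  have hhc : ∀ i, ContinuousOn (fun x => h x i) S := fun i =>
    (grad_cont hU₂ hw' i).mono hsub₂
  have hPc : ∀ i j, ContinuousOn (fun x => P x i j) S := fun i j =>
    (hess_cont hU₁ hθ' i j).mono hsub₁
  have hQc : ∀ i j, ContinuousOn (fun x => Q x i j) S := fun i j =>
    (hess_cont hU₂ hw' i j).mono hsub₂
  have hpc : ContinuousOn (fun x => Real.sqrt (∑ i, g x i ^ 2)) S :=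
    Real.continuous_sqrt.comp_continuousOn
      (continuousOn_finset_sum _ fun i _ => (hgc i).pow 2)
  have hqc : ContinuousOn (fun x => Real.sqrt (∑ i, (h x i - η i) ^ 2)) S :=
    Real.continuous_sqrt.comp_continuousOn
      (continuousOn_finset_sum _ fun i _ => ((hhc i).sub continuousOn_const).pow 2)
  have htc : ContinuousOn (fun x => Real.sqrt (∑ i, h x i ^ 2)) S :=
    Real.continuous_sqrt.comp_continuousOn
      (continuousOn_finset_sum _ fun i _ => (hhc i).pow 2)
  have hfPPc : ContinuousOn (fun x => frob d (P x) (P x)) S :=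
    continuousOn_finset_sum _ fun i _ =>
      continuousOn_finset_sum _ fun j _ => (hPc i j).mul (hPc i j)
  have hfQQc : ContinuousOn (fun x => frob d (Q x) (Q x)) S :=
    continuousOn_finset_sum _ fun i _ =>
      continuousOn_finset_sum _ fun j _ => (hQc i j).mul (hQc i j)
  have hfPQc : ContinuousOn (fun x => frob d (P x) (Q x)) S :=
    continuousOn_finset_sum _ fun i _ =>
      continuousOn_finset_sum _ fun j _ => (hPc i j).mul (hQc i j)
  have hrc : ContinuousOn (fun x => Real.sqrt (frob d (P x) (P x))) S :=
    Real.continuous_sqrt.comp_continuousOn hfPPc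
  have hsc : ContinuousOn (fun x => Real.sqrt (frob d (Q x) (Q x))) S :=
    Real.continuous_sqrt.comp_continuousOn hfQQc
  -- bounds on compact S
  obtain ⟨Cp, hCp⟩ := hSc.exists_bound_of_continuousOn hpc
  obtain ⟨Cq, hCq⟩ := hSc.exists_bound_of_continuousOn hqc
  obtain ⟨Ct, hCt⟩ := hSc.exists_bound_of_continuousOn htc
  have hCp0 : 0 ≤ Cp := le_trans (norm_nonneg _) (hCp x₀ hx₀S)
  have hCq0 : 0 ≤ Cq := le_trans (norm_nonneg _) (hCq x₀ hx₀S)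
  have hCt0 : 0 ≤ Ct := le_trans (norm_nonneg _) (hCt x₀ hx₀S)
  have hmem : ∀ᵐ x ∂μ, x ∈ S := ae_restrict_mem hSm
  -- a.e. bound on the flux G := A ∇θ
  have haeG : ∀ᵐ x ∂μ, Real.sqrt (∑ i, ((A x).mulVec (g x)) i ^ 2)
      ≤ Lam * Real.sqrt (∑ i, g x i ^ 2) := by
    filter_upwards [hell] with x hx
    refine ell_sqrt_bound hLam (Finset.sum_nonneg fun i _ => sq_nonneg _) (hx (g x)) ?_
    have := Finset.sum_mul_sq_le_sq_mul_sq Finset.univ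
      (fun i => ((A x).mulVec (g x)) i) (fun i => g x i)
    simpa [dotProduct] using this
  -- measurability of components of G
  have hGm : ∀ i, AEMeasurable (fun x => ((A x).mulVec (g x)) i) μ := by
    intro i
    have : (fun x => ((A x).mulVec (g x)) i) = fun x => ∑ j, A x i j * g x j := rfl
    rw [this]
    exact Finset.aemeasurable_fun_sum _ fun j _ =>
      (hAmeas i j).aemeasurable.mul ((hgc j).aemeasurable hSm)
  -- integrability of components of G
  have hGbd : ∀ i, ∀ᵐ x ∂μ, ‖((A x).mulVec (g x)) i‖ ≤ Lam * Cp := by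
    intro i
    filter_upwards [haeG, hmem] with x hx hxS
    have h1 : |((A x).mulVec (g x)) i| ≤ Real.sqrt (∑ j, ((A x).mulVec (g x)) j ^ 2) := by
      rw [← Real.sqrt_sq_eq_abs]
      exact Real.sqrt_le_sqrt (Finset.single_le_sum (f := fun j => ((A x).mulVec (g x)) j ^ 2)
        (fun j _ => sq_nonneg _) (Finset.mem_univ i))
    have h2 : Real.sqrt (∑ i, g x i ^ 2) ≤ Cp := le_trans (le_abs_self _) (hCp x hxS)
    calc ‖((A x).mulVec (g x)) i‖ ≤ Real.sqrt (∑ j, ((A x).mulVec (g x)) j ^ 2) := h1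
      _ ≤ Lam * Real.sqrt (∑ i, g x i ^ 2) := hx
      _ ≤ Lam * Cp := by nlinarith
  have intGi : ∀ i, Integrable (fun x => ((A x).mulVec (g x)) i) μ := fun i =>
    Integrable.mono' (integrable_const (Lam * Cp)) (hGm i).aestronglyMeasurable (hGbd i)
  -- Pi-valued integrability of G
  have intG : Integrable (fun x => (A x).mulVec (g x)) μ := by
    constructor
    · have : AEMeasurable (fun x => (A x).mulVec (g x)) μ := by
        choose Fm hFm hFe using hGm
        refine ⟨fun x i => Fm i x, measurable_pi_lambda _ fun i => hFm i, ?_⟩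
        filter_upwards [ae_all_iff.mpr hFe] with x hx
        funext i; exact hx i
      exact this.aestronglyMeasurable
    · refine HasFiniteIntegral.mono' (integrable_const (Lam * Cp)).2 ?_
      filter_upwards [ae_all_iff.mpr hGbd] with x hx
      exact (pi_norm_le_iff_of_nonneg (by positivity)).mpr hx
  -- componentwise evaluation of the integral
  have hproj : ∀ i, (∫ x, (A x).mulVec (g x) ∂μ) i = ∫ x, ((A x).mulVec (g x)) i ∂μ := by
    intro i
    exact ((ContinuousLinearMap.proj (R := ℝ) (φ := fun _ : Fin d => ℝ) i).integral_comp_comm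
      intG).symm
  -- integrability of continuous functions on the compact cube
  have intOn : ∀ {F : (Fin d → ℝ) → ℝ}, ContinuousOn F S → Integrable F μ := by
    intro F hF
    exact hF.integrableOn_compact hSc
  have int_pq : Integrable (fun x => Real.sqrt (∑ i, g x i ^ 2)
      * Real.sqrt (∑ i, (h x i - η i) ^ 2)) μ := intOn (hpc.mul hqc)
  have int_rs : Integrable (fun x => Real.sqrt (frob d (P x) (P x))
      * Real.sqrt (frob d (Q x) (Q x))) μ := intOn (hrc.mul hsc)
  have int_p2 : Integrable (fun x => Real.sqrt (∑ i, g x i ^ 2) ^ 2) μ := intOn (hpc.pow 2)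
  have int_q2 : Integrable (fun x => Real.sqrt (∑ i, (h x i - η i) ^ 2) ^ 2) μ :=
    intOn (hqc.pow 2)
  have int_r2 : Integrable (fun x => Real.sqrt (frob d (P x) (P x)) ^ 2) μ := intOn (hrc.pow 2)
  have int_s2 : Integrable (fun x => Real.sqrt (frob d (Q x) (Q x)) ^ 2) μ := intOn (hsc.pow 2)
  have int_fPQ : Integrable (fun x => frob d (P x) (Q x)) μ := intOn hfPQc
  -- symmetric sum identity
  have hsymm : ∀ x, Real.sqrt (∑ i, (η i - h x i) ^ 2)
      = Real.sqrt (∑ i, (h x i - η i) ^ 2) := by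
    intro x; congr 1; exact Finset.sum_congr rfl fun i _ => by ring
  -- a.e. Cauchy-Schwarz bound for the flux against any vector
  have hdotbd : ∀ᵐ x ∂μ, ∀ v : Fin d → ℝ,
      |(A x).mulVec (g x) ⬝ᵥ v|
        ≤ (Lam * Real.sqrt (∑ i, g x i ^ 2)) * Real.sqrt (∑ i, v i ^ 2) := by
    filter_upwards [haeG] with x hx
    intro v
    have h1 : |∑ i, ((A x).mulVec (g x)) i * v i|
        ≤ Real.sqrt (∑ i, ((A x).mulVec (g x)) i ^ 2) * Real.sqrt (∑ i, v i ^ 2) :=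
      sqrt_cs_sum _ _
    calc |(A x).mulVec (g x) ⬝ᵥ v| = |∑ i, ((A x).mulVec (g x)) i * v i| := rfl
      _ ≤ Real.sqrt (∑ i, ((A x).mulVec (g x)) i ^ 2) * Real.sqrt (∑ i, v i ^ 2) := h1
      _ ≤ (Lam * Real.sqrt (∑ i, g x i ^ 2)) * Real.sqrt (∑ i, v i ^ 2) :=
          mul_le_mul_of_nonneg_right hx (Real.sqrt_nonneg _)
  -- integrability of the two dot-product integrands
  have hdm : ∀ (v : (Fin d → ℝ) → (Fin d → ℝ)), (∀ j, AEMeasurable (fun x => v x j) μ) →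
      AEMeasurable (fun x => (A x).mulVec (g x) ⬝ᵥ v x) μ := by
    intro v hv
    have : (fun x => (A x).mulVec (g x) ⬝ᵥ v x)
        = fun x => ∑ j, ((A x).mulVec (g x)) j * v x j := rfl
    rw [this]
    exact Finset.aemeasurable_fun_sum _ fun j _ => (hGm j).mul (hv j)
  have int_dot1 : Integrable (fun x => (A x).mulVec (g x) ⬝ᵥ (η - h x)) μ := by
    refine Integrable.mono' (integrable_const (Lam * Cp * Cq))
      (hdm (fun x => η - h x) fun j =>
        (continuousOn_const.sub (hhc j)).aemeasurable hSm).aestronglyMeasurable ?_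
    filter_upwards [hdotbd, hmem] with x hx hxS
    have h1 := hx (η - h x)
    have h2 : Real.sqrt (∑ i, (η - h x) i ^ 2) = Real.sqrt (∑ i, (h x i - η i) ^ 2) := by
      simpa using hsymm x
    rw [h2] at h1
    have hp : Real.sqrt (∑ i, g x i ^ 2) ≤ Cp := le_trans (le_abs_self _) (hCp x hxS)
    have hq : Real.sqrt (∑ i, (h x i - η i) ^ 2) ≤ Cq := le_trans (le_abs_self _) (hCq x hxS)
    have hp0 := Real.sqrt_nonneg (∑ i, g x i ^ 2)
    have hq0 := Real.sqrt_nonneg (∑ i, (h x i - η i) ^ 2)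
    rw [Real.norm_eq_abs]
    refine h1.trans ?_
    have h5 : Real.sqrt (∑ i, g x i ^ 2) * Real.sqrt (∑ i, (h x i - η i) ^ 2) ≤ Cp * Cq :=
      mul_le_mul hp hq hq0 hCp0
    calc Lam * Real.sqrt (∑ i, g x i ^ 2) * Real.sqrt (∑ i, (h x i - η i) ^ 2)
        = Lam * (Real.sqrt (∑ i, g x i ^ 2) * Real.sqrt (∑ i, (h x i - η i) ^ 2)) := by ring
      _ ≤ Lam * (Cp * Cq) := mul_le_mul_of_nonneg_left h5 hLam.le
      _ = Lam * Cp * Cq := by ring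
  have int_dot2 : Integrable (fun x => (A x).mulVec (g x) ⬝ᵥ h x) μ := by
    refine Integrable.mono' (integrable_const (Lam * Cp * Ct))
      (hdm h fun j => (hhc j).aemeasurable hSm).aestronglyMeasurable ?_
    filter_upwards [hdotbd, hmem] with x hx hxS
    have h1 := hx (h x)
    have hp : Real.sqrt (∑ i, g x i ^ 2) ≤ Cp := le_trans (le_abs_self _) (hCp x hxS)
    have ht : Real.sqrt (∑ i, h x i ^ 2) ≤ Ct := le_trans (le_abs_self _) (hCt x hxS)
    have hp0 := Real.sqrt_nonneg (∑ i, g x i ^ 2)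
    have ht0 := Real.sqrt_nonneg (∑ i, h x i ^ 2)
    rw [Real.norm_eq_abs]
    refine h1.trans ?_
    have h5 : Real.sqrt (∑ i, g x i ^ 2) * Real.sqrt (∑ i, h x i ^ 2) ≤ Cp * Ct :=
      mul_le_mul hp ht ht0 hCp0
    calc Lam * Real.sqrt (∑ i, g x i ^ 2) * Real.sqrt (∑ i, h x i ^ 2)
        = Lam * (Real.sqrt (∑ i, g x i ^ 2) * Real.sqrt (∑ i, h x i ^ 2)) := by ring
      _ ≤ Lam * (Cp * Ct) := mul_le_mul_of_nonneg_left h5 hLam.le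
      _ = Lam * Cp * Ct := by ring
  have intX : Integrable (fun x => (A x).mulVec (g x) ⬝ᵥ (η - h x)
      - ι ^ 2 * frob d (P x) (Q x)) μ := int_dot1.sub (int_fPQ.const_mul _)
  have intY : Integrable (fun x => (A x).mulVec (g x) ⬝ᵥ h x
      + ι ^ 2 * frob d (P x) (Q x)) μ := int_dot2.add (int_fPQ.const_mul _)
  -- Step 1: pass the direction inside the integral
  have step1 : η ⬝ᵥ (∫ x, (A x).mulVec (g x) ∂μ)
      = ∫ x, ∑ i, η i * ((A x).mulVec (g x)) i ∂μ := by
    calc η ⬝ᵥ (∫ x, (A x).mulVec (g x) ∂μ)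
        = ∑ i, η i * (∫ x, (A x).mulVec (g x) ∂μ) i := rfl
      _ = ∑ i, η i * ∫ x, ((A x).mulVec (g x)) i ∂μ :=
          Finset.sum_congr rfl fun i _ => by rw [hproj i]
      _ = ∑ i, ∫ x, η i * ((A x).mulVec (g x)) i ∂μ :=
          Finset.sum_congr rfl fun i _ => (integral_const_mul _ _).symm
      _ = ∫ x, ∑ i, η i * ((A x).mulVec (g x)) i ∂μ :=
          (integral_finset_sum _ fun i _ => (intGi i).const_mul _).symm
  -- Step 2: use the adjoint orthogonality relation
  have step2 : ∫ x, ∑ i, η i * ((A x).mulVec (g x)) i ∂μ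
      = ∫ x, ((A x).mulVec (g x) ⬝ᵥ (η - h x) - ι ^ 2 * frob d (P x) (Q x)) ∂μ := by
    have hptx : (fun x => ∑ i, η i * ((A x).mulVec (g x)) i)
        = fun x => ((A x).mulVec (g x) ⬝ᵥ (η - h x) - ι ^ 2 * frob d (P x) (Q x))
          + ((A x).mulVec (g x) ⬝ᵥ h x + ι ^ 2 * frob d (P x) (Q x)) := by
      funext x
      have e1 : (A x).mulVec (g x) ⬝ᵥ (η - h x)
          = (A x).mulVec (g x) ⬝ᵥ η - (A x).mulVec (g x) ⬝ᵥ h x := dotProduct_sub _ _ _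
      have e2 : (A x).mulVec (g x) ⬝ᵥ η = ∑ i, η i * ((A x).mulVec (g x)) i :=
        dotProduct_comm _ _
      rw [e1, e2]; ring
    rw [hptx, integral_add intX intY, horth, add_zero]
  -- Step 3: a.e. pointwise bound on the integrand
  have haept : ∀ᵐ x ∂μ,
      |(A x).mulVec (g x) ⬝ᵥ (η - h x) - ι ^ 2 * frob d (P x) (Q x)|
        ≤ Lam * (Real.sqrt (∑ i, g x i ^ 2) * Real.sqrt (∑ i, (h x i - η i) ^ 2))
          + ι ^ 2 * (Real.sqrt (frob d (P x) (P x)) * Real.sqrt (frob d (Q x) (Q x))) := by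
    filter_upwards [hdotbd] with x hx
    have h1 := hx (η - h x)
    have h2 : Real.sqrt (∑ i, (η - h x) i ^ 2) = Real.sqrt (∑ i, (h x i - η i) ^ 2) := by
      simpa using hsymm x
    rw [h2] at h1
    have h3 : |ι ^ 2 * frob d (P x) (Q x)|
        ≤ ι ^ 2 * (Real.sqrt (frob d (P x) (P x)) * Real.sqrt (frob d (Q x) (Q x))) := by
      rw [abs_mul, abs_of_nonneg (by positivity : (0:ℝ) ≤ ι ^ 2)]
      exact mul_le_mul_of_nonneg_left (sqrt_cs_frob _ _) (by positivity)
    have h4 : |(A x).mulVec (g x) ⬝ᵥ (η - h x) - ι ^ 2 * frob d (P x) (Q x)|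
        ≤ |(A x).mulVec (g x) ⬝ᵥ (η - h x)| + |ι ^ 2 * frob d (P x) (Q x)| := by
      rw [sub_eq_add_neg]
      exact (abs_add_le _ _).trans (by rw [abs_neg])
    calc |(A x).mulVec (g x) ⬝ᵥ (η - h x) - ι ^ 2 * frob d (P x) (Q x)|
        ≤ |(A x).mulVec (g x) ⬝ᵥ (η - h x)| + |ι ^ 2 * frob d (P x) (Q x)| := h4
      _ ≤ Lam * (Real.sqrt (∑ i, g x i ^ 2) * Real.sqrt (∑ i, (h x i - η i) ^ 2))
          + ι ^ 2 * (Real.sqrt (frob d (P x) (P x)) * Real.sqrt (frob d (Q x) (Q x))) := by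
          rw [← mul_assoc]
          exact add_le_add h1 h3
  -- Step 3': integral bound
  have step3 : |∫ x, ((A x).mulVec (g x) ⬝ᵥ (η - h x) - ι ^ 2 * frob d (P x) (Q x)) ∂μ|
      ≤ Lam * ∫ x, Real.sqrt (∑ i, g x i ^ 2) * Real.sqrt (∑ i, (h x i - η i) ^ 2) ∂μ
        + ι ^ 2 * ∫ x, Real.sqrt (frob d (P x) (P x)) * Real.sqrt (frob d (Q x) (Q x)) ∂μ := by
    have habs : |∫ x, ((A x).mulVec (g x) ⬝ᵥ (η - h x) - ι ^ 2 * frob d (P x) (Q x)) ∂μ|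
        ≤ ∫ x, |(A x).mulVec (g x) ⬝ᵥ (η - h x) - ι ^ 2 * frob d (P x) (Q x)| ∂μ := by
      simpa [Real.norm_eq_abs] using
        norm_integral_le_integral_norm (μ := μ)
          (fun x => (A x).mulVec (g x) ⬝ᵥ (η - h x) - ι ^ 2 * frob d (P x) (Q x))
    refine habs.trans ?_
    have intRHS : Integrable (fun x =>
        Lam * (Real.sqrt (∑ i, g x i ^ 2) * Real.sqrt (∑ i, (h x i - η i) ^ 2))
          + ι ^ 2 * (Real.sqrt (frob d (P x) (P x)) * Real.sqrt (frob d (Q x) (Q x)))) μ :=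
      (int_pq.const_mul Lam).add (int_rs.const_mul (ι ^ 2))
    have hmono := integral_mono_ae intX.abs intRHS haept
    refine hmono.trans ?_
    rw [integral_add (int_pq.const_mul Lam) (int_rs.const_mul (ι ^ 2)),
      integral_const_mul, integral_const_mul]
  -- Step 4: Cauchy-Schwarz in L²
  have hp2eq : (fun x => Real.sqrt (∑ i, g x i ^ 2) ^ 2) = fun x => ∑ i, g x i ^ 2 :=
    funext fun x => Real.sq_sqrt (Finset.sum_nonneg fun i _ => sq_nonneg _)
  have hq2eq : (fun x => Real.sqrt (∑ i, (h x i - η i) ^ 2) ^ 2)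
      = fun x => ∑ i, (h x i - η i) ^ 2 :=
    funext fun x => Real.sq_sqrt (Finset.sum_nonneg fun i _ => sq_nonneg _)
  have hfrobPP0 : ∀ x, 0 ≤ frob d (P x) (P x) := fun x =>
    Finset.sum_nonneg fun i _ => Finset.sum_nonneg fun j _ => mul_self_nonneg _
  have hfrobQQ0 : ∀ x, 0 ≤ frob d (Q x) (Q x) := fun x =>
    Finset.sum_nonneg fun i _ => Finset.sum_nonneg fun j _ => mul_self_nonneg _
  have hr2eq : (fun x => Real.sqrt (frob d (P x) (P x)) ^ 2) = fun x => frob d (P x) (P x) :=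
    funext fun x => Real.sq_sqrt (hfrobPP0 x)
  have hs2eq : (fun x => Real.sqrt (frob d (Q x) (Q x)) ^ 2) = fun x => frob d (Q x) (Q x) :=
    funext fun x => Real.sq_sqrt (hfrobQQ0 x)
  have step4a : ∫ x, Real.sqrt (∑ i, g x i ^ 2) * Real.sqrt (∑ i, (h x i - η i) ^ 2) ∂μ
      ≤ Real.sqrt (∫ x, ∑ i, g x i ^ 2 ∂μ)
        * Real.sqrt (∫ x, ∑ i, (h x i - η i) ^ 2 ∂μ) := by
    have := integral_cs int_p2 int_q2 int_pq
    rwa [hp2eq, hq2eq] at this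
  have step4b : ∫ x, Real.sqrt (frob d (P x) (P x)) * Real.sqrt (frob d (Q x) (Q x)) ∂μ
      ≤ Real.sqrt (∫ x, frob d (P x) (P x) ∂μ)
        * Real.sqrt (∫ x, frob d (Q x) (Q x) ∂μ) := by
    have := integral_cs int_r2 int_s2 int_rs
    rwa [hr2eq, hs2eq] at this
  -- rewrite the affine gradient in the goal
  have egoal : ∫ x, ∑ i, grad d (fun y => w y - (c + η ⬝ᵥ y)) x i ^ 2 ∂μ
      = ∫ x, ∑ i, (h x i - η i) ^ 2 ∂μ := by
    refine integral_congr_ae ?_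
    filter_upwards [hmem] with x hxS
    exact Finset.sum_congr rfl fun i _ => by
      rw [grad_sub_affine hU₂ hw' c η (hsub₂ hxS) i]
  rw [egoal]
  -- final assembly
  set a1 := Real.sqrt (∫ x, ∑ i, g x i ^ 2 ∂μ) with ha1
  set a2 := Real.sqrt (∫ x, frob d (P x) (P x) ∂μ) with ha2
  set b1 := Real.sqrt (∫ x, ∑ i, (h x i - η i) ^ 2 ∂μ) with hb1
  set b2 := Real.sqrt (∫ x, frob d (Q x) (Q x) ∂μ) with hb2
  have ha10 : 0 ≤ a1 := Real.sqrt_nonneg _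
  have ha20 : 0 ≤ a2 := Real.sqrt_nonneg _
  have hb10 : 0 ≤ b1 := Real.sqrt_nonneg _
  have hb20 : 0 ≤ b2 := Real.sqrt_nonneg _
  have hM1 : Lam ≤ max Lam 1 := le_max_left _ _
  have hM2 : (1:ℝ) ≤ max Lam 1 := le_max_right _ _
  have hint_pq0 : 0 ≤ ∫ x, Real.sqrt (∑ i, g x i ^ 2)
      * Real.sqrt (∑ i, (h x i - η i) ^ 2) ∂μ :=
    integral_nonneg fun x => mul_nonneg (Real.sqrt_nonneg _) (Real.sqrt_nonneg _)
  have hint_rs0 : 0 ≤ ∫ x, Real.sqrt (frob d (P x) (P x))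
      * Real.sqrt (frob d (Q x) (Q x)) ∂μ :=
    integral_nonneg fun x => mul_nonneg (Real.sqrt_nonneg _) (Real.sqrt_nonneg _)
  calc |η ⬝ᵥ ∫ x, (A x).mulVec (g x) ∂μ|
      = |∫ x, ((A x).mulVec (g x) ⬝ᵥ (η - h x) - ι ^ 2 * frob d (P x) (Q x)) ∂μ| := by
        rw [step1, step2]
    _ ≤ Lam * ∫ x, Real.sqrt (∑ i, g x i ^ 2) * Real.sqrt (∑ i, (h x i - η i) ^ 2) ∂μ
        + ι ^ 2 * ∫ x, Real.sqrt (frob d (P x) (P x)) * Real.sqrt (frob d (Q x) (Q x)) ∂μ :=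
        step3
    _ ≤ Lam * (a1 * b1) + ι ^ 2 * (a2 * b2) := by
        have t1 := mul_le_mul_of_nonneg_left step4a hLam.le
        have t2 := mul_le_mul_of_nonneg_left step4b (by positivity : (0:ℝ) ≤ ι ^ 2)
        exact add_le_add t1 t2
    _ ≤ max Lam 1 * (a1 + ι * a2) * (b1 + ι * b2) := by
        nlinarith [mul_nonneg ha10 hb20, mul_nonneg ha20 hb10, mul_nonneg ha10 hb10,
          mul_nonneg ha20 hb20, mul_nonneg (mul_nonneg ha10 hb20) hι.le,
          mul_nonneg (mul_nonneg ha20 hb10) hι.le,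
          mul_nonneg (mul_nonneg (mul_nonneg ha20 hb20) hι.le) hι.le,
          mul_nonneg ha10 hb10, sq_nonneg ι, hLam.le]
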